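/- If G is a graph with no isolated vertex and H is a nontrivial graph with secure total domination number γ^s_{(1,1)}(H)=2, then γ^s_{(1,1)}(G∘H) = γ^s_{(1,1,0)}(G). -/

import Mathlib

namespace SecureW

open Finset

/-- Lexicographic product of simple graphs. -/
def lexProd {α β : Type*} (G : SimpleGraph α) (H : SimpleGraph β) :
    SimpleGraph (α × β) where
  Adj p q := G.Adj p.1 q.1 ∨ (p.1 = q.1 ∧ H.Adj p.2 q.2)
  symm := by
    constructor
    rintro p q (h | ⟨h1, h2⟩)
    · exact Or.inl h.symm
    · exact Or.inr ⟨h1.symm, h2.symm⟩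
  loopless := by
    constructor
    rintro p (h | ⟨_, h⟩)
    · exact G.irrefl h
    · exact H.irrefl h

open scoped Classical in
/-- Sum of `f` over the open neighbourhood of `v`. -/
noncomputable def nbrSum {V : Type*} [Fintype V] (G : SimpleGraph V) (f : V → ℕ) (v : V) : ℕ :=
  ∑ u ∈ Finset.univ.filter (fun u => G.Adj v u), f u

/-- `f` is a `w`-dominating function, where `w` is given as a list `(w_0, …, w_l)`. -/
def IsWDom {V : Type*} [Fintype V] (G : SimpleGraph V) (ws : List ℕ) (f : V → ℕ) : Prop :=
  (∀ v, f v < ws.length) ∧ ∀ v, ws.getD (f v) 0 ≤ nbrSum G f v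

/-- The function obtained from `f` by moving one unit of weight from `u` to `v`. -/
def move {V : Type*} [DecidableEq V] (f : V → ℕ) (u v : V) : V → ℕ :=
  fun x => if x = v then 1 else if x = u then f u - 1 else f x

open scoped Classical in
/-- `f` is a secure `w`-dominating function. -/
def IsSecureWDom {V : Type*} [Fintype V] (G : SimpleGraph V) (ws : List ℕ) (f : V → ℕ) : Prop :=
  IsWDom G ws f ∧ ∀ v, f v = 0 → ∃ u, G.Adj v u ∧ 0 < f u ∧ IsWDom G ws (move f u v)

/-- The weight of a function. -/
noncomputable def weight {V : Type*} [Fintype V] (f : V → ℕ) : ℕ := ∑ v, f v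

/-- The `w`-domination number. -/
noncomputable def wDomNum {V : Type*} [Fintype V] (G : SimpleGraph V) (ws : List ℕ) : ℕ :=
  sInf {k | ∃ f, IsWDom G ws f ∧ weight f = k}

/-- The secure `w`-domination number. -/
noncomputable def secWDomNum {V : Type*} [Fintype V] (G : SimpleGraph V) (ws : List ℕ) : ℕ :=
  sInf {k | ∃ f, IsSecureWDom G ws f ∧ weight f = k}

/-- The (ordinary) domination number, as `γ_{(1,0)}`. -/
noncomputable def domNum {V : Type*} [Fintype V] (G : SimpleGraph V) : ℕ :=
  wDomNum G [1, 0]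

/-- `G` has no isolated vertex. -/
def NoIsolated {V : Type*} (G : SimpleGraph V) : Prop := ∀ v, ∃ u, G.Adj v u

end SecureW

namespace SecureWProof
open SecureW Finset

variable {V : Type*} [Fintype V]

lemma one_le_nbrSum {G : SimpleGraph V} {f : V → ℕ} {v u : V} (h : G.Adj v u) (hf : f u ≠ 0) :
    1 ≤ nbrSum G f v := by
  classical
  have h1 : 1 ≤ f u := Nat.one_le_iff_ne_zero.2 hf
  refine h1.trans ?_
  unfold nbrSum
  refine Finset.single_le_sum (fun i _ => Nat.zero_le _) ?_
  simp [h]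

lemma exists_of_nbrSum {G : SimpleGraph V} {f : V → ℕ} {v : V} (h : nbrSum G f v ≠ 0) :
    ∃ u, G.Adj v u ∧ f u ≠ 0 := by
  classical
  unfold nbrSum at h
  obtain ⟨u, hu, hfu⟩ := Finset.exists_ne_zero_of_sum_ne_zero h
  exact ⟨u, (Finset.mem_filter.1 hu).2, hfu⟩

lemma dom11_iff {G : SimpleGraph V} {f : V → ℕ} :
    IsWDom G [1,1] f ↔ (∀ v, f v < 2) ∧ ∀ v, ∃ u, G.Adj v u ∧ f u ≠ 0 := by
  constructor
  · rintro ⟨hb, hd⟩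
    refine ⟨fun v => by simpa using hb v, fun v => ?_⟩
    have h2 := hd v
    have hv : f v = 0 ∨ f v = 1 := by have := hb v; simp at this; omega
    have hne : nbrSum G f v ≠ 0 := by
      rcases hv with h | h <;> rw [h] at h2 <;> simp at h2 <;> omega
    exact exists_of_nbrSum hne
  · rintro ⟨hb, hd⟩
    refine ⟨fun v => by simpa using hb v, fun v => ?_⟩
    obtain ⟨u, hu, hfu⟩ := hd v
    have h1 := one_le_nbrSum hu hfu
    have hv : f v = 0 ∨ f v = 1 := by have := hb v; omega
    rcases hv with h | h <;> rw [h] <;> simpa using h1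

lemma dom110_iff {G : SimpleGraph V} {g : V → ℕ} :
    IsWDom G [1,1,0] g ↔ (∀ v, g v < 3) ∧ ∀ v, g v ≤ 1 → ∃ u, G.Adj v u ∧ g u ≠ 0 := by
  constructor
  · rintro ⟨hb, hd⟩
    refine ⟨fun v => by simpa using hb v, fun v hv => ?_⟩
    have h2 := hd v
    have hv' : g v = 0 ∨ g v = 1 := by omega
    have hne : nbrSum G g v ≠ 0 := by
      rcases hv' with h | h <;> rw [h] at h2 <;> simp at h2 <;> omega
    exact exists_of_nbrSum hne
  · rintro ⟨hb, hd⟩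
    refine ⟨fun v => by simpa using hb v, fun v => ?_⟩
    have hv : g v = 0 ∨ g v = 1 ∨ g v = 2 := by have := hb v; omega
    rcases hv with h | h | h <;> rw [h]
    · simpa using one_le_nbrSum (hd v (by omega)).choose_spec.1 (hd v (by omega)).choose_spec.2
    · simpa using one_le_nbrSum (hd v (by omega)).choose_spec.1 (hd v (by omega)).choose_spec.2
    · simp



lemma move_self {W : Type*} {inst : DecidableEq W} (f : W → ℕ) (u v : W) :
    @move W inst f u v v = 1 := by
  rw [move, if_pos rfl]

lemma move_of_ne {W : Type*} {inst : DecidableEq W} (f : W → ℕ) (u v x : W)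
    (h1 : x ≠ v) (h2 : x ≠ u) : @move W inst f u v x = f x := by
  rw [move, if_neg h1, if_neg h2]

lemma move_left {W : Type*} {inst : DecidableEq W} (f : W → ℕ) (u v : W) (h : u ≠ v) :
    @move W inst f u v u = f u - 1 := by
  rw [move, if_neg h, if_pos rfl]

lemma move_lt_two {W : Type*} {inst : DecidableEq W} {f : W → ℕ} (u v : W)
    (hf : ∀ x, f x < 2) : ∀ x, @move W inst f u v x < 2 := by
  intro x
  rw [move]
  split_ifs with h h
  · omega
  · exact lt_of_le_of_lt (Nat.sub_le _ _) (hf u)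
  · exact hf x

lemma exists_pair {β : Type*} [Fintype β] {H : SimpleGraph β}
    (h1 : secWDomNum H [1,1] = 2) :
    ∃ b1 b2 : β, H.Adj b1 b2 ∧ (∀ c, c ≠ b1 → H.Adj b1 c) ∧ (∀ c, c ≠ b2 → H.Adj b2 c) := by
  classical
  unfold secWDomNum at h1
  have hne : {k | ∃ f, IsSecureWDom H [1,1] f ∧ weight f = k}.Nonempty := by
    by_contra h
    rw [Set.not_nonempty_iff_eq_empty] at h
    rw [h] at h1
    simp at h1
  have hmem : (2:ℕ) ∈ {k | ∃ f, IsSecureWDom H [1,1] f ∧ weight f = k} := by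
    have := Nat.sInf_mem hne
    rwa [h1] at this
  obtain ⟨f, ⟨hdom, hsec⟩, hw⟩ := hmem
  obtain ⟨hlt, hex⟩ := dom11_iff.1 hdom
  unfold weight at hw
  obtain ⟨b1, -, hb1⟩ := Finset.exists_ne_zero_of_sum_ne_zero
    (show ∑ v, f v ≠ 0 by rw [hw]; norm_num)
  have hfb1 : f b1 = 1 := by have := hlt b1; omega
  have herase : ∑ v ∈ univ.erase b1, f v = 1 := by
    have h := Finset.sum_erase_add univ f (mem_univ b1)
    omega
  obtain ⟨b2, hb2mem, hb2⟩ := Finset.exists_ne_zero_of_sum_ne_zero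
    (show ∑ v ∈ univ.erase b1, f v ≠ 0 by rw [herase]; norm_num)
  have hb2ne : b2 ≠ b1 := (Finset.mem_erase.1 hb2mem).1
  have hfb2 : f b2 = 1 := by have := hlt b2; omega
  have hsupp : ∀ x, x ≠ b1 → x ≠ b2 → f x = 0 := by
    intro x hx1 hx2
    by_contra hx
    have hfx : f x = 1 := by have := hlt x; omega
    have h3 : ∑ v ∈ ({b1, b2, x} : Finset β), f v = 3 := by
      rw [Finset.sum_insert (by simp [hb2ne.symm, hx1.symm]),
        Finset.sum_insert (by simp [hx2.symm]), Finset.sum_singleton]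
      omega
    have hle := Finset.sum_le_sum_of_subset (Finset.subset_univ ({b1, b2, x} : Finset β))
      (f := f)
    omega
  have hadj12 : H.Adj b1 b2 := by
    obtain ⟨x, hx, hfx⟩ := hex b1
    have hxb1 : x ≠ b1 := hx.ne'
    have hxx : x = b2 := by by_contra h; exact hfx (hsupp x hxb1 h)
    rwa [hxx] at hx
  have hzero : ∀ c, f c = 0 → H.Adj b1 c ∧ H.Adj b2 c := by
    intro c hc
    obtain ⟨u, hcu, hupos, hm⟩ := hsec c hc
    obtain ⟨hmlt, hmex⟩ := dom11_iff.1 hm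
    have hcne : c ≠ u := hcu.ne
    have hfu : f u = 1 := by have := hlt u; omega
    have hu12 : u = b1 ∨ u = b2 := by
      by_contra h; push_neg at h
      rw [hsupp u h.1 h.2] at hfu; omega
    -- show the other of {b1,b2} is adjacent to c
    have hother : ∀ b', b' ≠ u → (b' = b1 ∨ b' = b2) → H.Adj b' c := by
      intro b' hb'u hb'12
      obtain ⟨x, hx, hmx⟩ := hmex b'
      have hxval : x = c := by
        by_contra hxc
        rw [move] at hmx
        rw [if_neg hxc] at hmx
        by_cases hxu : x = u
        · rw [if_pos hxu] at hmx
          omega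
        · rw [if_neg hxu] at hmx
          have hx12 : x = b1 ∨ x = b2 := by
            by_contra hh; push_neg at hh; exact hmx (hsupp x hh.1 hh.2)
          have hxb' : x ≠ b' := hx.ne'
          -- u, b' ∈ {b1,b2}, u ≠ b', x ∈ {b1,b2}, x ≠ u, x ≠ b' : contradiction
          rcases hu12 with rfl | rfl <;> rcases hb'12 with rfl | rfl <;>
            rcases hx12 with rfl | rfl <;> simp_all
      rw [hxval] at hx
      exact hx
    rcases hu12 with rfl | rfl
    · exact ⟨hcu.symm, hother b2 (fun h => hb2ne h) (Or.inr rfl)⟩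
    · exact ⟨hother b1 (fun h => hb2ne h.symm) (Or.inl rfl), hcu.symm⟩
  refine ⟨b1, b2, hadj12, ?_, ?_⟩
  · intro c hc
    by_cases hfc : f c = 0
    · exact (hzero c hfc).1
    · have : c = b2 := by by_contra h; exact hfc (hsupp c hc h)
      rw [this]; exact hadj12
  · intro c hc
    by_cases hfc : f c = 0
    · exact (hzero c hfc).2
    · have : c = b1 := by by_contra h; exact hfc (hsupp c h hc)
      rw [this]; exact hadj12.symm

lemma copy_lemma {α β : Type*} [Fintype α] [Fintype β] [Nonempty β]
    {G : SimpleGraph α} {H : SimpleGraph β} {m : α × β → ℕ}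
    (hm : ∀ p, ∃ q, (lexProd G H).Adj p q ∧ m q ≠ 0)
    {w : α} (hw : ∑ b, m (w, b) ≤ 1) :
    ∃ x, G.Adj w x ∧ ∑ b, m (x, b) ≠ 0 := by
  classical
  have hkey : ∃ d : β, ∀ e, H.Adj d e → m (w, e) = 0 := by
    by_cases hz : ∀ b, m (w, b) = 0
    · exact ⟨Classical.arbitrary β, fun e _ => hz e⟩
    · push_neg at hz
      obtain ⟨d, hd⟩ := hz
      refine ⟨d, fun e he => ?_⟩
      have hde : d ≠ e := he.ne
      have hpair : m (w, d) + m (w, e) ≤ ∑ b, m (w, b) := by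
        calc m (w,d) + m (w,e) = ∑ x ∈ ({d, e} : Finset β), m (w, x) :=
              (Finset.sum_pair (f := fun x => m (w, x)) hde).symm
          _ ≤ _ := Finset.sum_le_sum_of_subset (Finset.subset_univ _)
      omega
  obtain ⟨d, hd⟩ := hkey
  obtain ⟨⟨x, e⟩, hadj, hme⟩ := hm (w, d)
  have hadj' : G.Adj w x ∨ (w = x ∧ H.Adj d e) := hadj
  rcases hadj' with h | ⟨h1, h2⟩
  · refine ⟨x, h, fun h0 => hme ?_⟩
    have h2 : m (x, e) ≤ ∑ b, m (x, b) := by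
      simpa using Finset.single_le_sum (f := fun b => m (x, b)) (fun _ _ => Nat.zero_le _)
        (Finset.mem_univ e)
    omega
  · exact absurd (h1 ▸ hd e h2) hme

end SecureWProof

open SecureWProof Finset

open SecureW in
theorem stmt_15 {α β : Type*} [Fintype α] [Fintype β]
    (G : SimpleGraph α) (H : SimpleGraph β)
    (hG : NoIsolated G) (hH : Nontrivial β)
    (h1 : secWDomNum H [1, 1] = 2) :
    secWDomNum (lexProd G H) [1, 1] = secWDomNum G [1, 1, 0] := by
  classical
  obtain ⟨b1, b2, hadj12, hu1, hu2⟩ := exists_pair h1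
  have hb12 : b1 ≠ b2 := hadj12.ne
  have hNe : Nonempty β := ⟨b1⟩
  apply le_antisymm
  · -- secWDomNum (lexProd G H) [1,1] ≤ secWDomNum G [1,1,0]
    have hneG : {k | ∃ g, IsSecureWDom G [1,1,0] g ∧ weight g = k}.Nonempty := by
      refine ⟨weight (fun _ : α => 2), fun _ => 2, ⟨⟨fun v => by norm_num, fun v => by norm_num⟩,
        fun v h => by norm_num at h⟩, rfl⟩
    obtain ⟨g, ⟨hgdom, hgsec⟩, hgw⟩ := Nat.sInf_mem hneG
    obtain ⟨hglt, hgex⟩ := dom110_iff.1 hgdom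
    set F : α × β → ℕ := fun p =>
      (if g p.1 ≠ 0 ∧ p.2 = b1 then 1 else 0) + (if g p.1 = 2 ∧ p.2 = b2 then 1 else 0)
      with hFdef
    have hFb1 : ∀ v, g v ≠ 0 → F (v, b1) = 1 := by
      intro v hv
      show (if g v ≠ 0 ∧ b1 = b1 then 1 else 0) + (if g v = 2 ∧ b1 = b2 then 1 else 0) = 1
      rw [if_pos ⟨hv, rfl⟩, if_neg (fun h => hb12 h.2)]
    have hFb2 : ∀ v, g v = 2 → F (v, b2) = 1 := by
      intro v hv
      show (if g v ≠ 0 ∧ b2 = b1 then 1 else 0) + (if g v = 2 ∧ b2 = b2 then 1 else 0) = 1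
      rw [if_neg (fun h => hb12 h.2.symm), if_pos ⟨hv, rfl⟩]
    have hFconf : ∀ p : α × β, ¬((g p.1 ≠ 0 ∧ p.2 = b1) ∧ (g p.1 = 2 ∧ p.2 = b2)) := by
      rintro p ⟨⟨-, h⟩, ⟨-, h'⟩⟩; exact hb12 (h ▸ h')
    have hFlt : ∀ p : α × β, F p < 2 := by
      intro p
      simp only [hFdef]
      split_ifs with hA hB hB
      · exact absurd ⟨hA, hB⟩ (hFconf p)
      all_goals omega
    have hwF : weight F = weight g := by
      unfold weight
      rw [Fintype.sum_prod_type]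
      refine Finset.sum_congr rfl fun v _ => ?_
      have hsum : ∑ b : β, F (v, b) = (if g v ≠ 0 then 1 else 0) + (if g v = 2 then 1 else 0) := by
        simp only [hFdef]
        rw [Finset.sum_add_distrib]
        congr 1
        · by_cases hv : g v ≠ 0 <;> simp [hv]
        · by_cases hv : g v = 2 <;> simp [hv]
      rw [hsum]
      have h3 : g v = 0 ∨ g v = 1 ∨ g v = 2 := by have := hglt v; omega
      rcases h3 with h | h | h <;> simp [h]
    -- domination of F
    have hFdom : ∀ p : α × β, ∃ q, (lexProd G H).Adj p q ∧ F q ≠ 0 := by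
      rintro ⟨v, c⟩
      by_cases hg2 : g v = 2
      · by_cases hcb1 : c = b1
        · exact ⟨(v, b2), Or.inr ⟨rfl, by rw [hcb1]; exact hadj12⟩,
            by rw [hFb2 v hg2]; omega⟩
        · exact ⟨(v, b1), Or.inr ⟨rfl, (hu1 c hcb1).symm⟩,
            by rw [hFb1 v (by omega)]; omega⟩
      · obtain ⟨u, hu, hgu⟩ := hgex v (by have := hglt v; omega)
        exact ⟨(u, b1), Or.inl hu, by rw [hFb1 u hgu]; omega⟩
    -- security of F
    have hFsec : ∀ p : α × β, F p = 0 →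
        ∃ q, (lexProd G H).Adj p q ∧ 0 < F q ∧ IsWDom (lexProd G H) [1,1]
          (@move _ (fun a b => Classical.propDecidable (a = b)) F q p) := by
      rintro ⟨v, c⟩ hFvc
      have hA : ¬(g v ≠ 0 ∧ c = b1) := by
        rintro ⟨ha, hb⟩
        rw [hb, hFb1 v ha] at hFvc
        omega
      have hB : ¬(g v = 2 ∧ c = b2) := by
        rintro ⟨ha, hb⟩
        rw [hb, hFb2 v ha] at hFvc
        omega
      have h3 : g v = 0 ∨ g v = 1 ∨ g v = 2 := by have := hglt v; omega
      rcases h3 with hgv | hgv | hgv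
      · -- g v = 0 : external witness from security of g
        obtain ⟨u, hvu, hgu, hgm⟩ := hgsec v hgv
        have huv : u ≠ v := hvu.ne'
        obtain ⟨hglt', hgex'⟩ := dom110_iff.1 hgm
        refine ⟨(u, b1), Or.inl hvu, by rw [hFb1 u (by omega)]; omega, ?_⟩
        rw [dom11_iff]
        refine ⟨move_lt_two (u, b1) (v, c) hFlt, ?_⟩
        rintro ⟨w, d⟩
        by_cases hgw2 : move g u v w = 2
        · -- w ∉ {u,v} and g w = 2 : internal domination
          have hwv : w ≠ v := by intro h; rw [h, move_self] at hgw2; omega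
          have hwu : w ≠ u := by
            intro h
            rw [h, move_left g u v (by rintro rfl; rw [move_self] at hgw2; omega)] at hgw2
            have := hglt u; omega
          have hgw : g w = 2 := by rw [move_of_ne g u v w hwv hwu] at hgw2; exact hgw2
          by_cases hdb1 : d = b1
          · refine ⟨(w, b2), Or.inr ⟨rfl, by rw [hdb1]; exact hadj12⟩, ?_⟩
            rw [move_of_ne _ _ _ (w,b2) (fun h => hwv (congrArg Prod.fst h))
              (fun h => hwu (congrArg Prod.fst h)), hFb2 w hgw]
            omega
          · refine ⟨(w, b1), Or.inr ⟨rfl, (hu1 d hdb1).symm⟩, ?_⟩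
            rw [move_of_ne _ _ _ (w,b1) (fun h => hwv (congrArg Prod.fst h))
              (fun h => hwu (congrArg Prod.fst h)), hFb1 w (by omega)]
            omega
        · -- move g u v w ≤ 1 : use domination of move g u v
          obtain ⟨x, hwx, hgx⟩ := hgex' w (by have := hglt' w; omega)
          by_cases hxv : x = v
          · exact ⟨(v, c), Or.inl (by rw [hxv] at hwx; exact hwx), by rw [move_self]; omega⟩
          · by_cases hxu : x = u
            · have hgu2 : g u = 2 := by
                rw [hxu, move_left g u v huv] at hgx
                have := hglt u; omega
              refine ⟨(u, b2), Or.inl (by rw [hxu] at hwx; exact hwx), ?_⟩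
              rw [move_of_ne _ _ _ (u, b2) (fun h => huv (congrArg Prod.fst h))
                (fun h => hb12 ((congrArg Prod.snd h).symm)), hFb2 u hgu2]
              omega
            · have hgx' : g x ≠ 0 := by rw [move_of_ne g u v x hxv hxu] at hgx; exact hgx
              refine ⟨(x, b1), Or.inl hwx, ?_⟩
              rw [move_of_ne _ _ _ (x, b1) (fun h => hxv (congrArg Prod.fst h))
                (fun h => hxu (congrArg Prod.fst h)), hFb1 x hgx']
              omega
      · -- g v = 1 : internal witness (v, b1)
        have hcb1 : c ≠ b1 := fun h => hA ⟨by omega, h⟩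
        refine ⟨(v, b1), Or.inr ⟨rfl, (hu1 c hcb1).symm⟩, by rw [hFb1 v (by omega)]; omega, ?_⟩
        rw [dom11_iff]
        refine ⟨move_lt_two (v, b1) (v, c) hFlt, ?_⟩
        rintro ⟨w, d⟩
        by_cases hgw2 : g w = 2
        · have hwv : w ≠ v := by intro h; rw [h] at hgw2; omega
          by_cases hdb1 : d = b1
          · refine ⟨(w, b2), Or.inr ⟨rfl, by rw [hdb1]; exact hadj12⟩, ?_⟩
            rw [move_of_ne _ _ _ (w,b2) (fun h => hwv (congrArg Prod.fst h))
              (fun h => hwv (congrArg Prod.fst h)), hFb2 w hgw2]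
            omega
          · refine ⟨(w, b1), Or.inr ⟨rfl, (hu1 d hdb1).symm⟩, ?_⟩
            rw [move_of_ne _ _ _ (w,b1) (fun h => hwv (congrArg Prod.fst h))
              (fun h => hwv (congrArg Prod.fst h)), hFb1 w (by omega)]
            omega
        · obtain ⟨x, hwx, hgx⟩ := hgex w (by have := hglt w; omega)
          by_cases hxv : x = v
          · exact ⟨(v, c), Or.inl (by rw [hxv] at hwx; exact hwx), by rw [move_self]; omega⟩
          · refine ⟨(x, b1), Or.inl hwx, ?_⟩
            rw [move_of_ne _ _ _ (x, b1) (fun h => hxv (congrArg Prod.fst h))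
              (fun h => hxv (congrArg Prod.fst h)), hFb1 x hgx]
            omega
      · -- g v = 2 : internal witness (v, b2)
        have hcb1 : c ≠ b1 := fun h => hA ⟨by omega, h⟩
        have hcb2 : c ≠ b2 := fun h => hB ⟨hgv, h⟩
        refine ⟨(v, b2), Or.inr ⟨rfl, (hu2 c hcb2).symm⟩, by rw [hFb2 v hgv]; omega, ?_⟩
        rw [dom11_iff]
        refine ⟨move_lt_two (v, b2) (v, c) hFlt, ?_⟩
        rintro ⟨w, d⟩
        have hmvb1 : move F (v, b2) (v, c) (v, b1) = 1 := by
          rw [move_of_ne _ _ _ (v, b1) (fun h => hcb1 ((congrArg Prod.snd h).symm))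
            (fun h => hb12 (congrArg Prod.snd h)), hFb1 v (by omega)]
        by_cases hwv : w = v
        · by_cases hdb1 : d = b1
          · exact ⟨(v, c), Or.inr ⟨hwv, by rw [hdb1]; exact hu1 c hcb1⟩, by rw [move_self]; omega⟩
          · exact ⟨(v, b1), Or.inr ⟨hwv, (hu1 d hdb1).symm⟩, by rw [move_of_ne _ _ _ _ (fun h => hcb1 ((congrArg Prod.snd h).symm)) (fun h => hb12 (congrArg Prod.snd h)), hFb1 v (by omega)]; omega⟩
        · by_cases hgw2 : g w = 2
          · by_cases hdb1 : d = b1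
            · refine ⟨(w, b2), Or.inr ⟨rfl, by rw [hdb1]; exact hadj12⟩, ?_⟩
              rw [move_of_ne _ _ _ (w,b2) (fun h => hwv (congrArg Prod.fst h))
                (fun h => hwv (congrArg Prod.fst h)), hFb2 w hgw2]
              omega
            · refine ⟨(w, b1), Or.inr ⟨rfl, (hu1 d hdb1).symm⟩, ?_⟩
              rw [move_of_ne _ _ _ (w,b1) (fun h => hwv (congrArg Prod.fst h))
                (fun h => hwv (congrArg Prod.fst h)), hFb1 w (by omega)]
              omega
          · obtain ⟨x, hwx, hgx⟩ := hgex w (by have := hglt w; omega)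
            by_cases hxv : x = v
            · exact ⟨(v, b1), Or.inl (by rw [hxv] at hwx; exact hwx), by rw [move_of_ne _ _ _ _ (fun h => hcb1 ((congrArg Prod.snd h).symm)) (fun h => hb12 (congrArg Prod.snd h)), hFb1 v (by omega)]; omega⟩
            · refine ⟨(x, b1), Or.inl hwx, ?_⟩
              rw [move_of_ne _ _ _ (x, b1) (fun h => hxv (congrArg Prod.fst h))
                (fun h => hxv (congrArg Prod.fst h)), hFb1 x hgx]
              omega
    have hmemF : weight F ∈ {k | ∃ f, IsSecureWDom (lexProd G H) [1,1] f ∧ weight f = k} :=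
      ⟨F, ⟨dom11_iff.2 ⟨hFlt, hFdom⟩, by
        intro p hp
        obtain ⟨q, hq1, hq2, hq3⟩ := hFsec p hp
        exact ⟨q, hq1, hq2, hq3⟩⟩, rfl⟩
    calc secWDomNum (lexProd G H) [1,1] ≤ weight F := Nat.sInf_le hmemF
      _ = weight g := hwF
      _ = secWDomNum G [1,1,0] := hgw
  · -- secWDomNum G [1,1,0] ≤ secWDomNum (lexProd G H) [1,1]
    have hneL : {k | ∃ f, IsSecureWDom (lexProd G H) [1,1] f ∧ weight f = k}.Nonempty := by
      refine ⟨weight (fun _ : α × β => 1), fun _ => 1, ⟨dom11_iff.2 ⟨fun v => one_lt_two, ?_⟩,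
        fun p hp => by norm_num at hp⟩, rfl⟩
      rintro ⟨v, b⟩
      obtain ⟨u, hu⟩ := hG v
      exact ⟨(u, b), Or.inl hu, one_ne_zero⟩
    obtain ⟨f, ⟨hfdom, hfsec⟩, hfw⟩ := Nat.sInf_mem hneL
    obtain ⟨hflt, hfex⟩ := dom11_iff.1 hfdom
    set g : α → ℕ := fun v => min (∑ b, f (v, b)) 2 with hgdef
    have hterm : ∀ v b, f (v, b) ≤ ∑ b', f (v, b') := by
      intro v b
      simpa using Finset.single_le_sum (f := fun b => f (v, b)) (fun _ _ => Nat.zero_le _)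
        (Finset.mem_univ b)
    have hgdom : IsWDom G [1,1,0] g := by
      rw [dom110_iff]
      refine ⟨fun v => by simp only [hgdef]; omega, fun v hv => ?_⟩
      have hsv : (∑ b, f (v, b)) ≤ 1 := by
        simp only [hgdef] at hv
        omega
      obtain ⟨x, hvx, hsx⟩ := copy_lemma hfex hsv
      refine ⟨x, hvx, ?_⟩
      simp only [hgdef]
      omega
    have hgsec : ∀ v, g v = 0 → ∃ u, G.Adj v u ∧ 0 < g u ∧ IsWDom G [1,1,0]
        (@move α (fun a b => Classical.propDecidable (a = b)) g u v) := by
      intro v hv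
      have hsv : (∑ b, f (v, b)) = 0 := by simp only [hgdef] at hv; omega
      have hfv : ∀ b, f (v, b) = 0 := by intro b; have := hterm v b; omega
      obtain ⟨d⟩ := hNe
      obtain ⟨⟨u, e⟩, hadj, hue, hmdom⟩ := hfsec (v, d) (hfv d)
      have hadj' : G.Adj v u ∨ (v = u ∧ H.Adj d e) := hadj
      have hvu : G.Adj v u := by
        rcases hadj' with h | ⟨h1', h2'⟩
        · exact h
        · rw [← h1'] at hue; rw [hfv e] at hue; omega
      have huv : u ≠ v := hvu.ne'
      have hsu : (∑ b, f (u, b)) ≠ 0 := fun h0 => by have := hterm u e; omega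
      refine ⟨u, hvu, by simp only [hgdef]; omega, ?_⟩
      rw [dom110_iff]
      constructor
      · intro w
        rw [move]
        split_ifs with h h
        · omega
        · simp only [hgdef]; omega
        · simp only [hgdef]; omega
      · intro w hw
        obtain ⟨hmlt, hmex⟩ := dom11_iff.1 hmdom
        by_cases hwu : w = u
        · refine ⟨v, by rw [hwu]; exact hvu.symm, ?_⟩
          rw [move_self]
          omega
        · -- copy sum of (move f (u,e) (v,d)) at w is ≤ 1
          have hmcopy_le : (∑ b, (@move (α × β) (fun a b => Classical.propDecidable (a = b))
              f (u,e) (v,d)) (w, b)) ≤ 1 := by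
            by_cases hwv : w = v
            · have hval : ∀ b : β, (@move (α × β) (fun a b => Classical.propDecidable (a = b))
                  f (u,e) (v,d)) (w, b) = if b = d then 1 else 0 := by
                intro b
                by_cases hbd : b = d
                · rw [hbd, hwv, move_self, if_pos rfl]
                · rw [move_of_ne _ _ _ _ (fun h => hbd (congrArg Prod.snd h))
                    (fun h => huv ((congrArg Prod.fst h).symm.trans hwv)), if_neg hbd, hwv]
                  exact hfv b
              rw [Finset.sum_congr rfl (fun b _ => hval b)]
              simp
            · have hval : ∀ b : β, (@move (α × β) (fun a b => Classical.propDecidable (a = b))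
                  f (u,e) (v,d)) (w, b) = f (w, b) := by
                intro b
                rw [move_of_ne _ _ _ _ (fun h => hwv (congrArg Prod.fst h))
                  (fun h => hwu (congrArg Prod.fst h))]
              rw [Finset.sum_congr rfl (fun b _ => hval b)]
              rw [move_of_ne g u v w hwv hwu] at hw
              simp only [hgdef] at hw
              omega
          obtain ⟨x, hwx, hsx⟩ := copy_lemma hmex hmcopy_le
          refine ⟨x, hwx, ?_⟩
          by_cases hxv : x = v
          · rw [hxv, move_self]
            omega
          · by_cases hxu : x = u
            · rw [hxu, move_left g u v huv]
              obtain ⟨b, -, hb⟩ := Finset.exists_ne_zero_of_sum_ne_zero hsx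
              rw [hxu] at hb
              have hsu2 : 2 ≤ ∑ b', f (u, b') := by
                by_cases hbe : b = e
                · rw [hbe, move_left f (u,e) (v,d) (fun h => huv (congrArg Prod.fst h))] at hb
                  have := hterm u e
                  omega
                · rw [move_of_ne f (u,e) (v,d) (u, b) (fun h => huv (congrArg Prod.fst h))
                    (fun h => hbe (congrArg Prod.snd h))] at hb
                  have hue1 : 1 ≤ f (u, e) := hue
                  have hpair : f (u, b) + f (u, e) ≤ ∑ b', f (u, b') := by
                    calc f (u, b) + f (u, e) = ∑ x ∈ ({b, e} : Finset β), f (u, x) :=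
                        (Finset.sum_pair (f := fun x => f (u, x)) hbe).symm
                      _ ≤ _ := Finset.sum_le_sum_of_subset (Finset.subset_univ _)
                  omega
              simp only [hgdef]
              omega
            · rw [move_of_ne g u v x hxv hxu]
              have hval : ∀ b : β, (@move (α × β) (fun a b => Classical.propDecidable (a = b))
                  f (u,e) (v,d)) (x, b) = f (x, b) := by
                intro b
                rw [move_of_ne _ _ _ _ (fun h => hxv (congrArg Prod.fst h))
                  (fun h => hxu (congrArg Prod.fst h))]
              rw [Finset.sum_congr rfl (fun b _ => hval b)] at hsx
              simp only [hgdef]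
              omega
    have hle : weight g ≤ weight f := by
      unfold weight
      rw [Fintype.sum_prod_type]
      exact Finset.sum_le_sum fun v _ => min_le_left _ _
    calc secWDomNum G [1,1,0] ≤ weight g := Nat.sInf_le ⟨g, ⟨hgdom, hgsec⟩, rfl⟩
      _ ≤ weight f := hle
      _ = secWDomNum (lexProd G H) [1,1] := hfw
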